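/- (Concrete form of the volatility validation theorem.) Let F > 0 and let v̂ : (0,∞) × ℝ → (0,∞) be continuous and satisfy: (i) for each k ∈ ℝ, τ ↦ v̂(τ,k)·√τ is nondecreasing on (0,∞); (ii) for each τ > 0, the slice k ↦ v̂(τ,k) is twice continuously differentiable with But(τ, k, v̂(τ,k), ∂_k v̂(τ,k), ∂²_k v̂(τ,k)) ≥ 0 for all k ∈ ℝ, and limsup_{k → ∞} v̂(τ,k)²/k < 2/τ. Define the call price surface C(τ,K) = F · BS(τ, log(K/F), v̂(τ, log(K/F))) for τ > 0, K > 0. Then: (a) for each K > 0, τ ↦ C(τ,K) is nondecreasing; (b) for each τ > 0, K ↦ C(τ,K) is convex and nonincreasing on (0,∞); (c) max(F − K, 0) ≤ C(τ,K) ≤ F for all τ, K; (d) for each τ > 0, C(τ,K) → 0 as K → ∞. -/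

import Mathlib

/-!
Work in the total volatility `w = v̂ √τ`, in which `BS τ k v̂ = bsCall k w`.
Calendar monotonicity is positivity of the vega `∂_w bsCall = φ(d₁)`.
In strike, `∂C/∂K = φ(d₂) w' - Φ(d₂)` at `k = log (K / F)`, and its `k`-derivative is
`φ(d₂) / w · But`, so `But ≥ 0` makes `C τ` convex; being bounded by `F`, it is then nonincreasing.
The lower bound is put–call parity together with `bsCall ≥ 0`, which follows from the vega and
the limit `0` as `w → 0⁺` for `k > 0`.
For the limit in strike, `w² ≤ a k` with `a < 2` forces `d₁ → -∞`. The `limsup` hypothesis only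
yields such an `a` once `w² / k` is known to be bounded, and boundedness follows from monotonicity
in strike: by Mills' inequality `w² ≥ A k` with large `A` would push the price above `C τ F < F`.
-/

open Real Filter Set

/-- Standard normal probability density function. -/
noncomputable def stdGaussPDF (x : ℝ) : ℝ :=
  (Real.sqrt (2 * Real.pi))⁻¹ * Real.exp (-(x ^ 2) / 2)

/-- Standard normal cumulative distribution function. -/
noncomputable def stdGaussCDF (x : ℝ) : ℝ :=
  ∫ t in Set.Iic x, stdGaussPDF t

/-- d1 term of the Black–Scholes formula. -/
noncomputable def d1 (τ k v : ℝ) : ℝ :=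
  -k / (v * Real.sqrt τ) + v * Real.sqrt τ / 2

/-- d2 term of the Black–Scholes formula. -/
noncomputable def d2 (τ k v : ℝ) : ℝ :=
  -k / (v * Real.sqrt τ) - v * Real.sqrt τ / 2

/-- Black–Scholes call price in units of the forward. -/
noncomputable def BS (τ k v : ℝ) : ℝ :=
  stdGaussCDF (d1 τ k v) - Real.exp k * stdGaussCDF (d2 τ k v)

/-- The butterfly functional. -/
noncomputable def But (τ k v₀ v₁ v₂ : ℝ) : ℝ :=
  (1 + d1 τ k v₀ * v₁ * Real.sqrt τ) * (1 + d2 τ k v₀ * v₁ * Real.sqrt τ) + v₀ * v₂ * τ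


open MeasureTheory ProbabilityTheory Topology

lemma ConvexOn.antitoneOn_of_le {f : ℝ → ℝ} {a M : ℝ} (hf : ConvexOn ℝ (Ioi a) f)
    (hM : ∀ x ∈ Ioi a, f x ≤ M) : AntitoneOn f (Ioi a) := by
  intro x hx y hy hxy
  rcases hxy.eq_or_lt with rfl | hxy
  · exact le_rfl
  by_contra! hlt
  set m := (f y - f x) / (y - x)
  have hm : 0 < m := div_pos (sub_pos.mpr hlt) (sub_pos.mpr hxy)
  set z := y + (M - f y) / m + 1
  have hyz : y < z := by
    have : 0 ≤ (M - f y) / m := div_nonneg (sub_nonneg.mpr (hM y hy)) hm.le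
    linarith
  have hz : z ∈ Ioi a := lt_trans hy hyz
  have hslope : m * (z - y) ≤ f z - f y :=
    (le_div_iff₀ (sub_pos.mpr hyz)).mp (hf.slope_mono_adjacent hx hz hxy hyz)
  have : m * (z - y) = M - f y + m := by simp only [z]; field_simp; ring
  linarith [hM z hz]

lemma stdGaussPDF_eq_gaussianPDFReal : stdGaussPDF = gaussianPDFReal 0 1 := by
  ext x
  simp [stdGaussPDF, gaussianPDFReal]

lemma stdGaussPDF_pos (x : ℝ) : 0 < stdGaussPDF x := by
  unfold stdGaussPDF
  positivity

lemma stdGaussPDF_le (x : ℝ) : stdGaussPDF x ≤ (√(2 * π))⁻¹ := by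
  unfold stdGaussPDF
  refine mul_le_of_le_one_right (by positivity) (exp_le_one_iff.mpr ?_)
  nlinarith [sq_nonneg x]

lemma integrable_stdGaussPDF : Integrable stdGaussPDF := by
  rw [stdGaussPDF_eq_gaussianPDFReal]
  exact integrable_gaussianPDFReal 0 1

lemma continuous_stdGaussPDF : Continuous stdGaussPDF := by
  unfold stdGaussPDF
  fun_prop

lemma stdGaussPDF_neg (x : ℝ) : stdGaussPDF (-x) = stdGaussPDF x := by
  simp [stdGaussPDF]

lemma hasDerivAt_stdGaussPDF (x : ℝ) : HasDerivAt stdGaussPDF (-x * stdGaussPDF x) x := by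
  have h : HasDerivAt (fun t : ℝ => -t ^ 2 / 2) (-x) x :=
    ((hasDerivAt_pow 2 x).neg.div_const 2).congr_deriv (by push_cast; ring)
  exact (h.exp.const_mul (√(2 * π))⁻¹).congr_deriv (by unfold stdGaussPDF; ring)

lemma tendsto_stdGaussPDF_atBot : Tendsto stdGaussPDF atBot (𝓝 0) := by
  have h : Tendsto (fun x : ℝ => -x ^ 2 / 2) atBot atBot :=
    ((tendsto_neg_atTop_atBot.comp ((tendsto_pow_atTop two_ne_zero).comp
      tendsto_neg_atBot_atTop)).atBot_div_const two_pos).congr fun x => by simp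
  have h' := (tendsto_exp_atBot.comp h).const_mul (√(2 * π))⁻¹
  rw [mul_zero] at h'
  exact h'

lemma integrable_id_mul_stdGaussPDF : Integrable (fun t => t * stdGaussPDF t) := by
  have h := (integrable_rpow_mul_exp_neg_mul_sq (b := 1 / 2) (by norm_num) (s := 1)
    (by norm_num)).const_mul (√(2 * π))⁻¹
  refine h.congr (ae_of_all _ fun t => ?_)
  simp only [rpow_one, stdGaussPDF]
  ring_nf

lemma stdGaussCDF_eq_cdf : stdGaussCDF = cdf (gaussianReal 0 1) := by
  ext x
  rw [cdf_eq_real, measureReal_def, gaussianReal_apply_eq_integral 0 one_ne_zero,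
    ENNReal.toReal_ofReal (setIntegral_nonneg measurableSet_Iic fun t _ =>
      gaussianPDFReal_nonneg 0 1 t), stdGaussCDF, stdGaussPDF_eq_gaussianPDFReal]

lemma monotone_stdGaussCDF : Monotone stdGaussCDF := by
  rw [stdGaussCDF_eq_cdf]
  exact monotone_cdf _

lemma stdGaussCDF_nonneg (x : ℝ) : 0 ≤ stdGaussCDF x := by
  rw [stdGaussCDF_eq_cdf]
  exact cdf_nonneg _ x

lemma tendsto_stdGaussCDF_atTop : Tendsto stdGaussCDF atTop (𝓝 1) := by
  rw [stdGaussCDF_eq_cdf]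
  exact tendsto_cdf_atTop _

lemma tendsto_stdGaussCDF_atBot : Tendsto stdGaussCDF atBot (𝓝 0) := by
  rw [stdGaussCDF_eq_cdf]
  exact tendsto_cdf_atBot _

lemma stdGaussCDF_add_integral_Ioi (x : ℝ) : stdGaussCDF x + ∫ t in Ioi x, stdGaussPDF t = 1 := by
  rw [stdGaussCDF, intervalIntegral.integral_Iic_add_Ioi integrable_stdGaussPDF.integrableOn
    integrable_stdGaussPDF.integrableOn, stdGaussPDF_eq_gaussianPDFReal,
    integral_gaussianPDFReal_eq_one 0 one_ne_zero]

lemma stdGaussCDF_lt_one (x : ℝ) : stdGaussCDF x < 1 := by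
  have h : 0 < ∫ t in Ioi x, stdGaussPDF t := by
    rw [setIntegral_pos_iff_support_of_nonneg_ae (ae_of_all _ fun t => (stdGaussPDF_pos t).le)
      integrable_stdGaussPDF.integrableOn,
      Function.support_eq_univ fun t => (stdGaussPDF_pos t).ne']
    simp
  linarith [stdGaussCDF_add_integral_Ioi x]

lemma stdGaussCDF_neg (x : ℝ) : stdGaussCDF (-x) = 1 - stdGaussCDF x := by
  rw [← stdGaussCDF_add_integral_Ioi x, stdGaussCDF, ← integral_comp_neg_Ioi]
  simp [stdGaussPDF_neg]

lemma hasDerivAt_stdGaussCDF (x : ℝ) : HasDerivAt stdGaussCDF (stdGaussPDF x) x := by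
  have h : ∀ y, stdGaussCDF y = stdGaussCDF 0 + ∫ t in (0 : ℝ)..y, stdGaussPDF t := fun y => by
    rw [stdGaussCDF, stdGaussCDF, ← intervalIntegral.integral_Iic_sub_Iic
      integrable_stdGaussPDF.integrableOn integrable_stdGaussPDF.integrableOn]
    ring
  rw [funext h]
  exact (intervalIntegral.integral_hasDerivAt_right integrable_stdGaussPDF.intervalIntegrable
    (continuous_stdGaussPDF.stronglyMeasurableAtFilter _ _)
    continuous_stdGaussPDF.continuousAt).const_add _

lemma stdGaussCDF_le_stdGaussPDF_div {x : ℝ} (hx : x < 0) :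
    stdGaussCDF x ≤ stdGaussPDF x / -x := by
  have hint : Integrable fun t => -t * stdGaussPDF t :=
    integrable_id_mul_stdGaussPDF.neg.congr (ae_of_all _ fun t => by simp)
  have hFTC : ∫ t in Iic x, -t * stdGaussPDF t = stdGaussPDF x := by
    simpa using integral_Iic_of_hasDerivAt_of_tendsto' (fun t _ => hasDerivAt_stdGaussPDF t)
      hint.integrableOn tendsto_stdGaussPDF_atBot
  calc stdGaussCDF x ≤ ∫ t in Iic x, (-x)⁻¹ * (-t * stdGaussPDF t) := by
        refine setIntegral_mono_on integrable_stdGaussPDF.integrableOn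
          (hint.const_mul _).integrableOn measurableSet_Iic fun t ht => ?_
        have h1 : 1 ≤ (-x)⁻¹ * -t := by
          rw [← div_eq_inv_mul, le_div_iff₀ (neg_pos.mpr hx)]
          linarith [mem_Iic.mp ht]
        nlinarith [stdGaussPDF_pos t]
    _ = stdGaussPDF x / -x := by rw [integral_const_mul, hFTC, div_eq_inv_mul]

/- `d1`, `d2` and `BS` depend on `τ` and `v` only through the total volatility `w = v √τ`. -/
noncomputable def bsD1 (k w : ℝ) : ℝ := -k / w + w / 2

noncomputable def bsD2 (k w : ℝ) : ℝ := -k / w - w / 2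

noncomputable def bsCall (k w : ℝ) : ℝ :=
  stdGaussCDF (bsD1 k w) - exp k * stdGaussCDF (bsD2 k w)

lemma BS_eq_bsCall (τ k v : ℝ) : BS τ k v = bsCall k (v * √τ) := rfl

lemma exp_mul_stdGaussPDF_bsD2 (k : ℝ) {w : ℝ} (hw : w ≠ 0) :
    exp k * stdGaussPDF (bsD2 k w) = stdGaussPDF (bsD1 k w) := by
  unfold stdGaussPDF bsD1 bsD2
  rw [mul_left_comm, ← exp_add]
  congr 2
  field_simp
  ring

section Derivatives

variable {κ w : ℝ → ℝ} {κ' w' t : ℝ}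

lemma hasDerivAt_bsD2_comp (hκ : HasDerivAt κ κ' t) (hw : HasDerivAt w w' t) (hwt : w t ≠ 0) :
    HasDerivAt (fun t => bsD2 (κ t) (w t)) ((κ t * w' - κ' * w t) / w t ^ 2 - w' / 2) t :=
  (hκ.neg.div hw hwt).sub (hw.div_const 2) |>.congr_deriv (by simp only [Pi.neg_apply]; ring)

lemma hasDerivAt_bsD1_comp (hκ : HasDerivAt κ κ' t) (hw : HasDerivAt w w' t) (hwt : w t ≠ 0) :
    HasDerivAt (fun t => bsD1 (κ t) (w t)) ((κ t * w' - κ' * w t) / w t ^ 2 + w' / 2) t :=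
  (hκ.neg.div hw hwt).add (hw.div_const 2) |>.congr_deriv (by simp only [Pi.neg_apply]; ring)

lemma hasDerivAt_bsCall_comp (hκ : HasDerivAt κ κ' t) (hw : HasDerivAt w w' t) (hwt : w t ≠ 0) :
    HasDerivAt (fun t => bsCall (κ t) (w t))
      (stdGaussPDF (bsD1 (κ t) (w t)) * w' - exp (κ t) * κ' * stdGaussCDF (bsD2 (κ t) (w t)))
      t := by
  have h1 := (hasDerivAt_stdGaussCDF _).comp t (hasDerivAt_bsD1_comp hκ hw hwt)
  have h2 := hκ.exp.mul ((hasDerivAt_stdGaussCDF _).comp t (hasDerivAt_bsD2_comp hκ hw hwt))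
  refine (h1.sub h2).congr_deriv ?_
  simp only [Function.comp_apply]
  linear_combination (w' / 2 - (κ t * w' - κ' * w t) / w t ^ 2) *
    exp_mul_stdGaussPDF_bsD2 (κ t) hwt

end Derivatives

lemma strictMonoOn_bsCall (k : ℝ) : StrictMonoOn (bsCall k) (Ioi 0) := by
  have hvega : ∀ w, 0 < w → HasDerivAt (bsCall k) (stdGaussPDF (bsD1 k w)) w := fun w hw =>
    (hasDerivAt_bsCall_comp (hasDerivAt_const w k) (hasDerivAt_id w) hw.ne').congr_deriv (by simp)
  refine strictMonoOn_of_deriv_pos (convex_Ioi 0)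
    (fun w hw => (hvega w hw).continuousAt.continuousWithinAt) fun w hw => ?_
  rw [interior_Ioi] at hw
  exact (hvega w hw).deriv ▸ stdGaussPDF_pos _

lemma bsCall_le_stdGaussCDF (k w : ℝ) : bsCall k w ≤ stdGaussCDF (bsD1 k w) :=
  sub_le_self _ (mul_nonneg (exp_pos k).le (stdGaussCDF_nonneg _))

lemma bsCall_lt_one (k w : ℝ) : bsCall k w < 1 :=
  (bsCall_le_stdGaussCDF k w).trans_lt (stdGaussCDF_lt_one _)

lemma bsCall_sub_exp_mul_bsCall_neg (k w : ℝ) :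
    bsCall k w - exp k * bsCall (-k) w = 1 - exp k := by
  have h1 : bsD1 k w = -bsD2 (-k) w := by unfold bsD1 bsD2; ring
  have h2 : bsD2 k w = -bsD1 (-k) w := by unfold bsD1 bsD2; ring
  have hexp : exp k * exp (-k) = 1 := by rw [← exp_add, add_neg_cancel, exp_zero]
  unfold bsCall
  rw [h1, h2, stdGaussCDF_neg, stdGaussCDF_neg]
  linear_combination stdGaussCDF (bsD2 (-k) w) * hexp

lemma tendsto_bsCall_nhdsGT_zero {k : ℝ} (hk : 0 < k) : Tendsto (bsCall k) (𝓝[>] 0) (𝓝 0) := by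
  have hdiv : Tendsto (fun w => -k / w) (𝓝[>] 0) atBot := by
    simpa only [div_eq_mul_inv] using
      tendsto_inv_nhdsGT_zero.const_mul_atTop_of_neg (neg_lt_zero.mpr hk)
  have hhalf : Tendsto (fun w : ℝ => w / 2) (𝓝[>] 0) (𝓝 0) :=
    ((continuous_id.div_const 2).tendsto' 0 0 (by simp)).mono_left nhdsWithin_le_nhds
  have h1 := tendsto_stdGaussCDF_atBot.comp (hdiv.atBot_add hhalf)
  have h2 := tendsto_stdGaussCDF_atBot.comp
    ((hdiv.atBot_add hhalf.neg).congr fun w => (sub_eq_add_neg _ _).symm)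
  have h := h1.sub (h2.const_mul (exp k))
  rw [mul_zero, sub_zero] at h
  exact h

lemma bsCall_nonneg_of_pos {k w : ℝ} (hk : 0 < k) (hw : 0 < w) : 0 ≤ bsCall k w :=
  le_of_tendsto (tendsto_bsCall_nhdsGT_zero hk) <| by
    filter_upwards [Ioo_mem_nhdsGT hw] with u hu
    exact (strictMonoOn_bsCall k).monotoneOn hu.1 hw hu.2.le

lemma bsCall_nonneg (k : ℝ) {w : ℝ} (hw : 0 < w) : 0 ≤ bsCall k w := by
  rcases lt_trichotomy k 0 with hk | rfl | hk
  · have hparity := bsCall_sub_exp_mul_bsCall_neg k w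
    have hexp : exp k < 1 := exp_lt_one_iff.mpr hk
    nlinarith [bsCall_nonneg_of_pos (neg_pos.mpr hk) hw, exp_pos k]
  · have h := monotone_stdGaussCDF (show -w / 2 ≤ w / 2 by linarith)
    simpa [bsCall, bsD1, bsD2, neg_div] using h
  · exact bsCall_nonneg_of_pos hk hw

lemma one_sub_exp_le_bsCall (k : ℝ) {w : ℝ} (hw : 0 < w) : 1 - exp k ≤ bsCall k w := by
  rw [← bsCall_sub_exp_mul_bsCall_neg k w]
  exact sub_le_self _ (mul_nonneg (exp_pos k).le (bsCall_nonneg (-k) hw))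

lemma bsCall_strike_bounds {F K w : ℝ} (hF : 0 < F) (hK : 0 < K) (hw : 0 < w) :
    max (F - K) 0 ≤ F * bsCall (log (K / F)) w ∧ F * bsCall (log (K / F)) w ≤ F := by
  have hlow := one_sub_exp_le_bsCall (log (K / F)) hw
  rw [exp_log (div_pos hK hF)] at hlow
  refine ⟨max_le ?_ (mul_nonneg hF.le (bsCall_nonneg _ hw)),
    mul_le_of_le_one_right hF.le (bsCall_lt_one _ _).le⟩
  calc F - K = F * (1 - K / F) := by field_simp
    _ ≤ _ := mul_le_mul_of_nonneg_left hlow hF.le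

lemma But_eq_bsD1_bsD2 {τ : ℝ} (hτ : 0 ≤ τ) (k v₀ v₁ v₂ : ℝ) :
    But τ k v₀ v₁ v₂ = (1 + bsD1 k (v₀ * √τ) * (v₁ * √τ)) * (1 + bsD2 k (v₀ * √τ) * (v₁ * √τ))
      + v₀ * √τ * (v₂ * √τ) := by
  rw [But, show d1 τ k v₀ = bsD1 k (v₀ * √τ) from rfl, show d2 τ k v₀ = bsD2 k (v₀ * √τ) from rfl]
  linear_combination (-(v₀ * v₂)) * mul_self_sqrt hτ

/- The strike derivative `∂C/∂K` at `K = F e^k`, for a smile `w` with derivative `w'`. -/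
noncomputable def dualDelta (w w' : ℝ → ℝ) (k : ℝ) : ℝ :=
  stdGaussPDF (bsD2 k (w k)) * w' k - stdGaussCDF (bsD2 k (w k))

section Strike

variable {F : ℝ} {w w' w'' : ℝ → ℝ}

lemma hasDerivAt_bsCall_strike (hF : 0 < F) (hpos : ∀ k, 0 < w k)
    (hw : ∀ k, HasDerivAt w (w' k) k) {K : ℝ} (hK : 0 < K) :
    HasDerivAt (fun K => F * bsCall (log (K / F)) (w (log (K / F))))
      (dualDelta w w' (log (K / F))) K := by
  have hKF : 0 < K / F := div_pos hK hF
  have hlog : HasDerivAt (fun K => log (K / F)) K⁻¹ K :=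
    ((hasDerivAt_id K).div_const F).log hKF.ne' |>.congr_deriv (by simp only [id]; field_simp)
  refine ((hasDerivAt_bsCall_comp hlog ((hw _).comp K hlog) (hpos _).ne').const_mul F
    ).congr_deriv ?_
  rw [Function.comp_apply, ← exp_mul_stdGaussPDF_bsD2 _ (hpos _).ne', exp_log hKF, dualDelta]
  field_simp

lemma hasDerivAt_bsD2_slice (hpos : ∀ k, 0 < w k) (hw : ∀ k, HasDerivAt w (w' k) k) (k : ℝ) :
    HasDerivAt (fun k => bsD2 k (w k)) (-(1 + bsD1 k (w k) * w' k) / w k) k :=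
  (hasDerivAt_bsD2_comp (hasDerivAt_id k) (hw k) (hpos k).ne').congr_deriv <| by
    have := (hpos k).ne'
    unfold bsD1
    field_simp
    simp only [id]
    ring

lemma hasDerivAt_dualDelta (hpos : ∀ k, 0 < w k) (hw : ∀ k, HasDerivAt w (w' k) k)
    (hw' : ∀ k, HasDerivAt w' (w'' k) k) (k : ℝ) :
    HasDerivAt (dualDelta w w') (stdGaussPDF (bsD2 k (w k)) / w k *
      ((1 + bsD1 k (w k) * w' k) * (1 + bsD2 k (w k) * w' k) + w k * w'' k)) k := by
  have hd := hasDerivAt_bsD2_slice hpos hw k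
  have hφ := ((hasDerivAt_stdGaussPDF _).comp k hd).mul (hw' k)
  have hΦ := (hasDerivAt_stdGaussCDF _).comp k hd
  refine (hφ.sub hΦ).congr_deriv ?_
  have hd1 : bsD1 k (w k) = bsD2 k (w k) + w k := by unfold bsD1 bsD2; ring
  have := (hpos k).ne'
  rw [Function.comp_apply, hd1]
  field_simp
  ring

lemma convexOn_bsCall_strike (hF : 0 < F) (hpos : ∀ k, 0 < w k)
    (hw : ∀ k, HasDerivAt w (w' k) k) (hw' : ∀ k, HasDerivAt w' (w'' k) k)
    (hbut : ∀ k, 0 ≤ (1 + bsD1 k (w k) * w' k) * (1 + bsD2 k (w k) * w' k) + w k * w'' k) :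
    ConvexOn ℝ (Ioi 0) (fun K => F * bsCall (log (K / F)) (w (log (K / F)))) := by
  have hC := fun K (hK : K ∈ Ioi (0 : ℝ)) => hasDerivAt_bsCall_strike hF hpos hw hK
  have hmono : Monotone (dualDelta w w') :=
    monotone_of_deriv_nonneg (fun k => (hasDerivAt_dualDelta hpos hw hw' k).differentiableAt)
      fun k => (hasDerivAt_dualDelta hpos hw hw' k).deriv ▸
        mul_nonneg (div_nonneg (stdGaussPDF_pos _).le (hpos k).le) (hbut k)
  refine MonotoneOn.convexOn_of_deriv (convex_Ioi 0)
    (fun K hK => (hC K hK).continuousAt.continuousWithinAt) ?_ ?_ <;> rw [interior_Ioi]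
  · exact fun K hK => (hC K hK).differentiableAt.differentiableWithinAt
  · intro x hx y hy hxy
    rw [(hC x hx).deriv, (hC y hy).deriv]
    exact hmono (log_le_log (div_pos hx hF) (div_le_div_of_nonneg_right hxy hF.le))

end Strike

lemma antitone_bsCall_of_antitoneOn_strike {F : ℝ} {w : ℝ → ℝ} (hF : 0 < F)
    (h : AntitoneOn (fun K => F * bsCall (log (K / F)) (w (log (K / F)))) (Ioi 0)) :
    Antitone fun k => bsCall k (w k) := by
  intro k₁ k₂ hk
  have := h (mul_pos hF (exp_pos k₁)) (mul_pos hF (exp_pos k₂))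
    (mul_le_mul_of_nonneg_left (exp_le_exp.mpr hk) hF.le)
  simp only [mul_div_cancel_left₀ _ hF.ne', log_exp] at this
  exact le_of_mul_le_mul_left this hF

lemma bsD1_le_mul_sqrt {k w r : ℝ} (hk : 0 ≤ k) (hw : 0 < w) (hr : 0 < r) (hwr : w ≤ r * √k) :
    bsD1 k w ≤ (r ^ 2 - 2) / (2 * r) * √k := by
  set s := √k
  have key : (r ^ 2 - 2) / (2 * r) * s - bsD1 k w =
      (r * s - w) * (r * w + 2 * s) / (2 * r * w) := by
    unfold bsD1
    rw [← sq_sqrt hk]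
    field_simp
    ring
  have : 0 ≤ (r * s - w) * (r * w + 2 * s) / (2 * r * w) := by
    have := sub_nonneg.mpr hwr
    positivity
  linarith

lemma tendsto_bsCall_atTop {w : ℝ → ℝ} {a : ℝ} (hpos : ∀ k, 0 < w k) (ha : a < 2)
    (h : ∀ᶠ k in atTop, w k ^ 2 ≤ a * k) : Tendsto (fun k => bsCall k (w k)) atTop (𝓝 0) := by
  obtain ⟨k₀, hk₀, hk₀pos⟩ := (h.and (eventually_gt_atTop 0)).exists
  have ha0 : 0 < a := pos_of_mul_pos_left ((pow_pos (hpos k₀) 2).trans_le hk₀) hk₀pos.le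
  have hr : 0 < √a := sqrt_pos.mpr ha0
  have hc : (√a ^ 2 - 2) / (2 * √a) < 0 :=
    div_neg_of_neg_of_pos (by rw [sq_sqrt ha0.le]; linarith) (by positivity)
  have hD1 : Tendsto (fun k => bsD1 k (w k)) atTop atBot := by
    refine tendsto_atBot_mono' _ ?_ (tendsto_sqrt_atTop.const_mul_atTop_of_neg hc)
    filter_upwards [h, eventually_ge_atTop 0] with k hk hk0
    refine bsD1_le_mul_sqrt hk0 (hpos k) hr ?_
    rw [← sqrt_mul ha0.le]
    exact le_sqrt_of_sq_le hk
  exact squeeze_zero (fun k => bsCall_nonneg k (hpos k)) (fun k => bsCall_le_stdGaussCDF k (w k))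
    (tendsto_stdGaussCDF_atBot.comp hD1)

lemma exp_mul_stdGaussCDF_bsD2_le {k w : ℝ} (hk : 0 ≤ k) (hw : 0 < w) :
    exp k * stdGaussCDF (bsD2 k w) ≤ 2 / (√(2 * π) * w) := by
  have hneg : w / 2 ≤ -bsD2 k w := by
    have : 0 ≤ k / w := div_nonneg hk hw.le
    unfold bsD2
    linarith [neg_div w k]
  have hD2 : bsD2 k w < 0 := by linarith
  calc exp k * stdGaussCDF (bsD2 k w) ≤ exp k * (stdGaussPDF (bsD2 k w) / -bsD2 k w) :=
        mul_le_mul_of_nonneg_left (stdGaussCDF_le_stdGaussPDF_div hD2) (exp_pos k).le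
    _ = stdGaussPDF (bsD1 k w) / -bsD2 k w := by
        rw [← exp_mul_stdGaussPDF_bsD2 k hw.ne', mul_div_assoc]
    _ ≤ (√(2 * π))⁻¹ / (w / 2) :=
        div_le_div₀ (by positivity) (stdGaussPDF_le _) (by positivity) hneg
    _ = 2 / (√(2 * π) * w) := by field_simp

lemma stdGaussCDF_sub_le_bsCall {k w : ℝ} (hk : 0 ≤ k) (hw : 0 < w) (hkw : 4 * k ≤ w ^ 2) :
    stdGaussCDF (w / 4) - 2 / (√(2 * π) * w) ≤ bsCall k w := by
  have hD1 : w / 4 ≤ bsD1 k w := by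
    have : k / w ≤ w / 4 := by rw [div_le_iff₀ hw]; nlinarith
    unfold bsD1
    linarith [neg_div w k]
  have := exp_mul_stdGaussCDF_bsD2_le hk hw
  unfold bsCall
  linarith [monotone_stdGaussCDF hD1]

lemma eventually_sq_le_mul_of_bsCall_le {w : ℝ → ℝ} {b : ℝ} (hb : b < 1) (hpos : ∀ k, 0 < w k)
    (hle : ∀ k, 0 ≤ k → bsCall k (w k) ≤ b) : ∃ c, ∀ᶠ k in atTop, w k ^ 2 ≤ c * k := by
  have hlim : Tendsto (fun x => stdGaussCDF (x / 4) - 2 / (√(2 * π) * x)) atTop (𝓝 (1 - 0)) :=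
    (tendsto_stdGaussCDF_atTop.comp (tendsto_id.atTop_div_const (by norm_num))).sub
      (tendsto_const_nhds.div_atTop (tendsto_id.const_mul_atTop (by positivity)))
  obtain ⟨W, hW⟩ := eventually_atTop.mp (hlim.eventually (lt_mem_nhds (by simpa using hb)))
  refine ⟨max (W ^ 2) 4, ?_⟩
  filter_upwards [eventually_ge_atTop 1] with k hk
  by_contra! hlt
  have hWw : W ≤ w k := by
    refine (lt_of_pow_lt_pow_left₀ 2 (hpos k).le ?_).le
    nlinarith [le_max_left (W ^ 2) 4]
  have h4 : 4 * k ≤ w k ^ 2 := by nlinarith [le_max_right (W ^ 2) 4]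
  linarith [hW (w k) hWw, stdGaussCDF_sub_le_bsCall (by linarith) (hpos k) h4, hle k (by linarith)]

lemma tendsto_bsCall_of_limsup_lt {τ b : ℝ} {V : ℝ → ℝ} (hτ : 0 < τ) (hV : ∀ k, 0 < V k)
    (hb : b < 1) (hle : ∀ k, 0 ≤ k → bsCall k (V k * √τ) ≤ b)
    (hlimsup : limsup (fun k => V k ^ 2 / k) atTop < 2 / τ) :
    Tendsto (fun k => bsCall k (V k * √τ)) atTop (𝓝 0) := by
  have hw : ∀ k, 0 < V k * √τ := fun k => mul_pos (hV k) (sqrt_pos.mpr hτ)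
  have hsq : ∀ k, (V k * √τ) ^ 2 = τ * V k ^ 2 := fun k => by rw [mul_pow, sq_sqrt hτ.le]; ring
  -- without this bound the `limsup` would be the junk value `0` of an unbounded function
  obtain ⟨c, hc⟩ := eventually_sq_le_mul_of_bsCall_le hb hw hle
  have hbdd : IsBoundedUnder (· ≤ ·) atTop fun k => V k ^ 2 / k := by
    refine ⟨c / τ, eventually_map.mpr ?_⟩
    filter_upwards [hc, eventually_gt_atTop 0] with k hk hk0
    rw [div_le_div_iff₀ hk0 hτ]
    nlinarith [hsq k]
  obtain ⟨a, hla, ha⟩ := exists_between hlimsup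
  refine tendsto_bsCall_atTop hw (a := a * τ) (by rwa [lt_div_iff₀ hτ] at ha) ?_
  filter_upwards [eventually_lt_of_limsup_lt hla hbdd, eventually_gt_atTop 0] with k hk hk0
  rw [div_lt_iff₀ hk0] at hk
  nlinarith [hsq k]

lemma tendsto_bsCall_strike_atTop {F τ : ℝ} {V : ℝ → ℝ} (hF : 0 < F) (hτ : 0 < τ)
    (hV : ∀ k, 0 < V k) (hlimsup : limsup (fun k => V k ^ 2 / k) atTop < 2 / τ)
    (hanti : AntitoneOn (fun K => F * bsCall (log (K / F)) (V (log (K / F)) * √τ)) (Ioi 0)) :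
    Tendsto (fun K => F * bsCall (log (K / F)) (V (log (K / F)) * √τ)) atTop (𝓝 0) := by
  have hmoney := antitone_bsCall_of_antitoneOn_strike (w := fun k => V k * √τ) hF hanti
  have htail := tendsto_bsCall_of_limsup_lt hτ hV (bsCall_lt_one 0 _) (fun k hk => hmoney hk)
    hlimsup
  rw [← mul_zero F]
  exact (htail.comp (tendsto_log_atTop.comp (tendsto_id.atTop_div_const hF))).const_mul F

theorem stmt17_general (F : ℝ) (hF : 0 < F) (vhat : ℝ → ℝ → ℝ)
    (hpos : ∀ τ, 0 < τ → ∀ k, 0 < vhat τ k)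
    (hcal : ∀ k : ℝ, MonotoneOn (fun τ => vhat τ k * Real.sqrt τ) (Set.Ioi (0 : ℝ)))
    (hsmooth : ∀ τ, 0 < τ → ContDiff ℝ 2 (vhat τ))
    (hBut : ∀ τ, 0 < τ → ∀ k : ℝ,
      0 ≤ But τ k (vhat τ k) (deriv (vhat τ) k) (deriv (deriv (vhat τ)) k))
    (hlimsup : ∀ τ, 0 < τ →
      Filter.limsup (fun k => (vhat τ k) ^ 2 / k) Filter.atTop < 2 / τ)
    (C : ℝ → ℝ → ℝ)
    (hC : ∀ τ K : ℝ, C τ K =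
      F * BS τ (Real.log (K / F)) (vhat τ (Real.log (K / F)))) :
    (∀ K, 0 < K → MonotoneOn (fun τ => C τ K) (Set.Ioi (0 : ℝ))) ∧
    (∀ τ, 0 < τ → ConvexOn ℝ (Set.Ioi (0 : ℝ)) (C τ) ∧
      AntitoneOn (C τ) (Set.Ioi (0 : ℝ))) ∧
    (∀ τ, 0 < τ → ∀ K, 0 < K → max (F - K) 0 ≤ C τ K ∧ C τ K ≤ F) ∧
    (∀ τ, 0 < τ → Filter.Tendsto (fun K => C τ K) Filter.atTop (nhds 0)) := by
  have hw : ∀ τ, 0 < τ → ∀ k, 0 < vhat τ k * √τ := fun τ hτ k =>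
    mul_pos (hpos τ hτ k) (sqrt_pos.mpr hτ)
  have hCτ : ∀ τ, C τ = fun K => F * bsCall (log (K / F)) (vhat τ (log (K / F)) * √τ) :=
    fun τ => funext (hC τ)
  have hbounds : ∀ τ, 0 < τ → ∀ K, 0 < K → max (F - K) 0 ≤ C τ K ∧ C τ K ≤ F :=
    fun τ hτ K hK => hCτ τ ▸ bsCall_strike_bounds hF hK (hw τ hτ _)
  have hconvex : ∀ τ, 0 < τ → ConvexOn ℝ (Ioi 0) (C τ) := fun τ hτ => by
    have hd1 k := ((hsmooth τ hτ).differentiable two_ne_zero k).hasDerivAt.mul_const √τ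
    have hd2 k := ((hsmooth τ hτ).differentiable_deriv_two k).hasDerivAt.mul_const √τ
    rw [hCτ]
    exact convexOn_bsCall_strike hF (hw τ hτ) hd1 hd2 fun k =>
      But_eq_bsD1_bsD2 hτ.le .. ▸ hBut τ hτ k
  have hanti : ∀ τ, 0 < τ → AntitoneOn (C τ) (Ioi 0) := fun τ hτ =>
    (hconvex τ hτ).antitoneOn_of_le fun K hK => (hbounds τ hτ K hK).2
  refine ⟨fun K _ τ₁ hτ₁ τ₂ hτ₂ h => ?_, fun τ hτ => ⟨hconvex τ hτ, hanti τ hτ⟩, hbounds,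
    fun τ hτ => ?_⟩
  · simp only [hC, BS_eq_bsCall]
    exact mul_le_mul_of_nonneg_left ((strictMonoOn_bsCall _).monotoneOn (hw τ₁ hτ₁ _)
      (hw τ₂ hτ₂ _) (hcal _ hτ₁ hτ₂ h)) hF.le
  · have hstrike := hanti τ hτ
    rw [hCτ] at hstrike ⊢
    exact tendsto_bsCall_strike_atTop hF hτ (hpos τ hτ) (hlimsup τ hτ) hstrike

theorem stmt17 (F : ℝ) (hF : 0 < F) (vhat : ℝ → ℝ → ℝ)
    (hpos : ∀ τ, 0 < τ → ∀ k, 0 < vhat τ k)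
    (hcont : ContinuousOn (fun p : ℝ × ℝ => vhat p.1 p.2)
      (Set.Ioi (0 : ℝ) ×ˢ (Set.univ : Set ℝ)))
    (hcal : ∀ k : ℝ, MonotoneOn (fun τ => vhat τ k * Real.sqrt τ) (Set.Ioi (0 : ℝ)))
    (hsmooth : ∀ τ, 0 < τ → ContDiff ℝ 2 (vhat τ))
    (hBut : ∀ τ, 0 < τ → ∀ k : ℝ,
      0 ≤ But τ k (vhat τ k) (deriv (vhat τ) k) (deriv (deriv (vhat τ)) k))
    (hlimsup : ∀ τ, 0 < τ →
      Filter.limsup (fun k => (vhat τ k) ^ 2 / k) Filter.atTop < 2 / τ)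
    (C : ℝ → ℝ → ℝ)
    (hC : ∀ τ K : ℝ, C τ K =
      F * BS τ (Real.log (K / F)) (vhat τ (Real.log (K / F)))) :
    (∀ K, 0 < K → MonotoneOn (fun τ => C τ K) (Set.Ioi (0 : ℝ))) ∧
    (∀ τ, 0 < τ → ConvexOn ℝ (Set.Ioi (0 : ℝ)) (C τ) ∧
      AntitoneOn (C τ) (Set.Ioi (0 : ℝ))) ∧
    (∀ τ, 0 < τ → ∀ K, 0 < K → max (F - K) 0 ≤ C τ K ∧ C τ K ≤ F) ∧
    (∀ τ, 0 < τ → Filter.Tendsto (fun K => C τ K) Filter.atTop (nhds 0)) :=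
  stmt17_general F hF vhat hpos hcal hsmooth hBut hlimsup C hC
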